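/- arXiv:2010.09129 — 5 statements merged into one kernel-verified Lean document; each statement's English description precedes it below -/
import Mathlib

section
/- Let W = {(x3·conj(x1), x4·conj(x1), x3·conj(x2)) : x ∈ ℂ^4, ‖x‖ = 1} ⊆ ℂ^3. Then (0,0,1/2) ∈ W and (0,1/2,0) ∈ W, but (0,1/4,1/4) ∉ W. Consequently W is not convex. -/
/-!
The points `(0, 0, 1/2)` and `(0, 1/2, 0)` are attained at the unit vectors `(e₁ + e₂)/√2` and
`(e₀ + e₃)/√2`. Their midpoint `(0, 1/4, 1/4)` is not attained: the first two coordinates force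
`x₀ ≠ 0` and then `x₂ = 0`, which kills the third coordinate.
-/

open ComplexConjugate

section UnitPair

variable (𝕜 : Type*) {ι : Type*} [RCLike 𝕜] [DecidableEq ι]

noncomputable def unitPairVector (i j : ι) : EuclideanSpace 𝕜 ι :=
  ((√2)⁻¹ : 𝕜) • (EuclideanSpace.single i 1 + EuclideanSpace.single j 1)

variable {𝕜}

theorem norm_unitPairVector [Fintype ι] {i j : ι} (hij : i ≠ j) :
    ‖unitPairVector 𝕜 i j‖ = 1 := by
  have hsum :
      ‖(EuclideanSpace.single i 1 + EuclideanSpace.single j 1 : EuclideanSpace 𝕜 ι)‖ = √2 := by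
    rw [← sq_eq_sq₀ (norm_nonneg _) (Real.sqrt_nonneg _), sq,
      norm_add_sq_eq_norm_sq_add_norm_sq_of_inner_eq_zero (𝕜 := 𝕜) _ _ ?_]
    · norm_num
    · rw [EuclideanSpace.inner_single_left]; simp [hij]
  rw [unitPairVector, norm_smul, hsum, norm_inv, RCLike.norm_ofReal,
    abs_of_nonneg (Real.sqrt_nonneg _), inv_mul_cancel₀ (by positivity)]

theorem unitPairVector_apply_of_ne {i j k : ι} (hi : k ≠ i) (hj : k ≠ j) :
    unitPairVector 𝕜 i j k = 0 := by
  simp [unitPairVector, hi, hj]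

theorem unitPairVector_apply_mul_conj_apply {i j : ι} (hij : i ≠ j) :
    unitPairVector 𝕜 i j j * conj (unitPairVector 𝕜 i j i) = 1 / 2 := by
  simp only [unitPairVector, PiLp.smul_apply, PiLp.add_apply, PiLp.single_apply, if_pos,
    if_neg hij, if_neg hij.symm, smul_eq_mul, mul_one, add_zero, zero_add, map_inv₀, RCLike.conj_ofReal]
  rw [← mul_inv, ← RCLike.ofReal_mul, Real.mul_self_sqrt zero_le_two, RCLike.ofReal_ofNat, one_div]

end UnitPair

theorem stmt_2
    (W : Set (ℂ × ℂ × ℂ))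
    (hW : W = {p : ℂ × ℂ × ℂ | ∃ x : EuclideanSpace ℂ (Fin 4), ‖x‖ = 1 ∧
      p = (x 2 * starRingEnd ℂ (x 0), x 3 * starRingEnd ℂ (x 0), x 2 * starRingEnd ℂ (x 1))}) :
    ((0, 0, 1/2) : ℂ × ℂ × ℂ) ∈ W ∧ ((0, 1/2, 0) : ℂ × ℂ × ℂ) ∈ W ∧
      ((0, 1/4, 1/4) : ℂ × ℂ × ℂ) ∉ W ∧ ¬ Convex ℝ W := by
  have hA : ((0, 0, 1/2) : ℂ × ℂ × ℂ) ∈ W :=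
    hW ▸ ⟨unitPairVector ℂ 1 2, norm_unitPairVector (by decide), by
      simp [unitPairVector_apply_of_ne, unitPairVector_apply_mul_conj_apply]⟩
  have hB : ((0, 1/2, 0) : ℂ × ℂ × ℂ) ∈ W :=
    hW ▸ ⟨unitPairVector ℂ 0 3, norm_unitPairVector (by decide), by
      simp [unitPairVector_apply_of_ne, unitPairVector_apply_mul_conj_apply]⟩
  have hC : ((0, 1/4, 1/4) : ℂ × ℂ × ℂ) ∉ W := by
    rw [hW]
    rintro ⟨x, -, hx⟩
    simp only [Prod.mk.injEq] at hx
    obtain ⟨h₀, h₁, h₂⟩ := hx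
    have hx₂ : x 2 = 0 :=
      (mul_eq_zero.mp h₀.symm).resolve_right (right_ne_zero_of_mul (a := x 3) (h₁ ▸ by norm_num))
    rw [hx₂, zero_mul] at h₂
    norm_num at h₂
  have hmid : midpoint ℝ ((0, 0, 1/2) : ℂ × ℂ × ℂ) (0, 1/2, 0) = (0, 1/4, 1/4) := by
    simp [midpoint_eq_smul_add, Prod.ext_iff]; norm_num
  exact ⟨hA, hB, hC, fun hconv => hC (hmid ▸ hconv.midpoint_mem hA hB)⟩
end

section
/- There exist three pairwise commuting linear operators T1, T2, T3 on ℂ^4 such that the joint numerical range W(T1,T2,T3) = {(⟨T1 x,x⟩, ⟨T2 x,x⟩, ⟨T3 x,x⟩) : x ∈ ℂ^4, ‖x‖=1} is not a convex subset of ℂ^3. -/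
/-!
With respect to `ℂ⁴ = ℂ² ⊕ ℂ²` take `Tₖ = [[0, Aₖ], [0, 0]]` with `A₁ = I`, `A₂ = 2 E₁₂` and
`A₃ = diag(1, -1)`. Any two such operators multiply to zero, so they commute. The quadratic forms
are `x̄₀x₂ + x̄₁x₃`, `2 x̄₀x₃` and `x̄₀x₂ - x̄₁x₃`; unit vectors supported on `{0, 2}` and on `{1, 3}`
attain `(1/2, 0, 1/2)` and `(1/2, 0, -1/2)`. Their midpoint `(1/2, 0, 0)` would need
`x̄₀x₂ = x̄₁x₃ = 1/4`, so `x₀ ≠ 0 ≠ x₃`, contradicting `2 x̄₀x₃ = 0`.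
-/

open Matrix ComplexConjugate

theorem commute_of_mul_eq_zero {R : Type*} [Mul R] [Zero R] {a b : R} (hab : a * b = 0)
    (hba : b * a = 0) : Commute a b :=
  hab.trans hba.symm

theorem inner_toEuclideanCLM_single {𝕜 n : Type*} [RCLike 𝕜] [Fintype n] [DecidableEq n]
    (x : EuclideanSpace 𝕜 n) (i j : n) (c : 𝕜) :
    inner 𝕜 x (toEuclideanCLM (𝕜 := 𝕜) (single i j c) x) = conj (x i) * c * x j := by
  simp only [EuclideanSpace.inner_eq_star_dotProduct, dotProduct, ofLp_toEuclideanCLM, single_mulVec,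
    Function.update_apply, Pi.zero_apply, Pi.star_apply, RCLike.star_def, ite_mul, zero_mul,
    Finset.sum_ite_eq', Finset.mem_univ, ↓reduceIte]
  ring

def jointNumericalRange₃ {𝕜 E : Type*} [RCLike 𝕜] [NormedAddCommGroup E] [InnerProductSpace 𝕜 E]
    (T₁ T₂ T₃ : E →L[𝕜] E) : Set (𝕜 × 𝕜 × 𝕜) :=
  {p | ∃ x : E, ‖x‖ = 1 ∧ p = (inner 𝕜 x (T₁ x), inner 𝕜 x (T₂ x), inner 𝕜 x (T₃ x))}

namespace NonconvexJointNumericalRange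

def A₁ : Matrix (Fin 4) (Fin 4) ℂ := single 0 2 1 + single 1 3 1

def A₂ : Matrix (Fin 4) (Fin 4) ℂ := single 0 3 2

def A₃ : Matrix (Fin 4) (Fin 4) ℂ := single 0 2 1 - single 1 3 1

theorem commute_A₁_A₂ : Commute A₁ A₂ :=
  commute_of_mul_eq_zero (by simp [A₁, A₂, add_mul, single_mul_single_of_ne])
    (by simp [A₁, A₂, mul_add, single_mul_single_of_ne])

theorem commute_A₁_A₃ : Commute A₁ A₃ :=
  commute_of_mul_eq_zero (by simp [A₁, A₃, add_mul, mul_sub, single_mul_single_of_ne])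
    (by simp [A₁, A₃, mul_add, sub_mul, single_mul_single_of_ne])

theorem commute_A₂_A₃ : Commute A₂ A₃ :=
  commute_of_mul_eq_zero (by simp [A₂, A₃, mul_sub, single_mul_single_of_ne])
    (by simp [A₂, A₃, sub_mul, single_mul_single_of_ne])

noncomputable abbrev W : Set (ℂ × ℂ × ℂ) :=
  jointNumericalRange₃ (toEuclideanCLM (𝕜 := ℂ) A₁) (toEuclideanCLM (𝕜 := ℂ) A₂)
    (toEuclideanCLM (𝕜 := ℂ) A₃)

theorem mem_W_iff (p : ℂ × ℂ × ℂ) :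
    p ∈ W ↔ ∃ x : EuclideanSpace ℂ (Fin 4), ‖x‖ = 1 ∧
      p = (conj (x 0) * x 2 + conj (x 1) * x 3, conj (x 0) * 2 * x 3,
        conj (x 0) * x 2 - conj (x 1) * x 3) := by
  simp only [W, jointNumericalRange₃, A₁, A₂, A₃, map_add, map_sub, Set.mem_ofPred_eq,
    _root_.add_apply, _root_.sub_apply, inner_add_right, inner_sub_right,
    inner_toEuclideanCLM_single, mul_one]

theorem inv_sqrt_two_mul_inv_sqrt_two : (√2 : ℂ)⁻¹ * (√2 : ℂ)⁻¹ = 2⁻¹ := by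
  rw [← mul_inv, ← Complex.ofReal_mul, Real.mul_self_sqrt zero_le_two, Complex.ofReal_ofNat]

theorem half_zero_half_mem_W : ((1 / 2 : ℂ), (0 : ℂ), (1 / 2 : ℂ)) ∈ W := by
  refine (mem_W_iff _).2 ⟨!₂[((√2)⁻¹ : ℝ), 0, ((√2)⁻¹ : ℝ), 0], ?_, ?_⟩
  · simp [EuclideanSpace.norm_eq, Fin.sum_univ_four, ← two_mul]
  · simp [inv_sqrt_two_mul_inv_sqrt_two]

theorem half_zero_neg_half_mem_W : ((1 / 2 : ℂ), (0 : ℂ), (-(1 / 2) : ℂ)) ∈ W := by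
  refine (mem_W_iff _).2 ⟨!₂[0, ((√2)⁻¹ : ℝ), 0, ((√2)⁻¹ : ℝ)], ?_, ?_⟩
  · simp [EuclideanSpace.norm_eq, Fin.sum_univ_four, ← two_mul]
  · simp [inv_sqrt_two_mul_inv_sqrt_two]

theorem half_zero_zero_notMem_W : ((1 / 2 : ℂ), (0 : ℂ), (0 : ℂ)) ∉ W := by
  rw [mem_W_iff]
  rintro ⟨x, -, hx⟩
  obtain ⟨hsum, hcross, hdiff⟩ := by simpa only [Prod.mk.injEq] using hx
  have h02 : conj (x 0) * x 2 = 1 / 4 := by linear_combination -(hsum + hdiff) / 2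
  have h13 : conj (x 1) * x 3 = 1 / 4 := by linear_combination -(hsum - hdiff) / 2
  have hx0 : conj (x 0) ≠ 0 := left_ne_zero_of_mul (by rw [h02]; norm_num)
  have hx3 : x 3 ≠ 0 := right_ne_zero_of_mul (by rw [h13]; norm_num)
  exact mul_ne_zero (mul_ne_zero hx0 two_ne_zero) hx3 hcross.symm

theorem not_convex_W : ¬ Convex ℝ W := fun hW => half_zero_zero_notMem_W <| by
  convert hW.midpoint_mem half_zero_half_mem_W half_zero_neg_half_mem_W using 1
  norm_num [midpoint_eq_smul_add]

end NonconvexJointNumericalRange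

theorem stmt_3 :
    ∃ T₁ T₂ T₃ : EuclideanSpace ℂ (Fin 4) →L[ℂ] EuclideanSpace ℂ (Fin 4),
      Commute T₁ T₂ ∧ Commute T₁ T₃ ∧ Commute T₂ T₃ ∧
      ¬ Convex ℝ {p : ℂ × ℂ × ℂ | ∃ x : EuclideanSpace ℂ (Fin 4), ‖x‖ = 1 ∧
          p = ((inner ℂ x (T₁ x) : ℂ), (inner ℂ x (T₂ x) : ℂ), (inner ℂ x (T₃ x) : ℂ))} := by
  open NonconvexJointNumericalRange in
  exact ⟨toEuclideanCLM (𝕜 := ℂ) A₁, toEuclideanCLM (𝕜 := ℂ) A₂, toEuclideanCLM (𝕜 := ℂ) A₃,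
    commute_A₁_A₂.map _, commute_A₁_A₃.map _, commute_A₂_A₃.map _, not_convex_W⟩
end

section
/- Let T1, T2, T3 be the 4×4 complex matrices with all entries zero except (T1)_{1,3} = 1, (T2)_{1,4} = 1, (T3)_{2,3} = 1. Then the Asplund–Ptak numerical range W_AP(T1,T2,T3) = {(⟨T1 x,y⟩, ⟨T2 x,y⟩, ⟨T3 x,y⟩) : x,y ∈ ℂ^4, ‖x‖ ≤ 1, ‖y‖ ≤ 1} contains (0,0,1/2) and (0,1/2,0) but not (0,1/4,1/4); hence W_AP(T1,T2,T3) is not convex. -/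
open Matrix

lemma Matrix.inner_toEuclideanLin_single {𝕜 ι : Type*} [RCLike 𝕜] [Fintype ι] [DecidableEq ι]
    (i j : ι) (c : 𝕜) (x y : EuclideanSpace 𝕜 ι) :
    inner 𝕜 y (toEuclideanLin (single i j c) x) = (starRingEnd 𝕜) (y i) * (c * x j) := by
  simp [PiLp.inner_apply, toLpLin_apply, single_mulVec, Function.update_apply,
    mul_comm]

lemma not_convex_of_midpoint_notMem {E : Type*} [AddCommGroup E] [Module ℝ E] {s : Set E}
    {a b : E} (ha : a ∈ s) (hb : b ∈ s) (hab : midpoint ℝ a b ∉ s) : ¬ Convex ℝ s :=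
  fun hs ↦ hab (hs.midpoint_mem ha hb)

theorem stmt_4 (T₁ T₂ T₃ : Matrix (Fin 4) (Fin 4) ℂ)
    (h₁ : T₁ = Matrix.single 0 2 1)
    (h₂ : T₂ = Matrix.single 0 3 1)
    (h₃ : T₃ = Matrix.single 1 2 1)
    (WAP : Set (ℂ × ℂ × ℂ))
    (hWAP : WAP = {p : ℂ × ℂ × ℂ | ∃ x y : EuclideanSpace ℂ (Fin 4), ‖x‖ ≤ 1 ∧ ‖y‖ ≤ 1 ∧
      p = ((inner ℂ y (Matrix.toEuclideanLin T₁ x) : ℂ),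
           (inner ℂ y (Matrix.toEuclideanLin T₂ x) : ℂ),
           (inner ℂ y (Matrix.toEuclideanLin T₃ x) : ℂ))}) :
    ((0, 0, 1/2) : ℂ × ℂ × ℂ) ∈ WAP ∧ ((0, 1/2, 0) : ℂ × ℂ × ℂ) ∈ WAP ∧
      ((0, 1/4, 1/4) : ℂ × ℂ × ℂ) ∉ WAP ∧ ¬ Convex ℝ WAP := by
  subst h₁ h₂ h₃
  simp only [inner_toEuclideanLin_single, one_mul] at hWAP
  have hmem₃ : ((0, 0, 1/2) : ℂ × ℂ × ℂ) ∈ WAP := hWAP ▸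
    ⟨EuclideanSpace.single 2 (1/2), EuclideanSpace.single 1 1, by norm_num, by simp, by simp⟩
  have hmem₂ : ((0, 1/2, 0) : ℂ × ℂ × ℂ) ∈ WAP := hWAP ▸
    ⟨EuclideanSpace.single 3 (1/2), EuclideanSpace.single 0 1, by norm_num, by simp, by simp⟩
  -- the first coordinate vanishes only if `y 0 = 0` or `x 2 = 0`, killing the second or third
  have hmid_notMem : ((0, 1/4, 1/4) : ℂ × ℂ × ℂ) ∉ WAP := by
    rw [hWAP]
    rintro ⟨x, y, -, -, hp⟩
    simp only [Prod.mk.injEq] at hp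
    obtain ⟨h₀, h₁, h₂⟩ := hp
    rcases mul_eq_zero.mp h₀.symm with h | h
    · simp [h] at h₁
    · simp [h] at h₂
  refine ⟨hmem₃, hmem₂, hmid_notMem, not_convex_of_midpoint_notMem hmem₃ hmem₂ ?_⟩
  convert hmid_notMem using 2
  norm_num [midpoint_eq_smul_add, Prod.ext_iff]
end

section
/- Let T1 = [[0,0],[1,0]] and T2 = [[1,0],[0,-1]] on ℂ^2. Then trace T1 = trace T2 = 0, yet there is no orthonormal basis (u1,u2) of ℂ^2 with ⟨T1 u_j, u_j⟩ = 0 and ⟨T2 u_j, u_j⟩ = 0 for j = 1,2; i.e., the set of constant joint diagonals D_const(T1,T2) is empty. -/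
/-!
Summing `⟪u j, T (u j)⟫` over an orthonormal basis gives `trace T`, so a constant joint diagonal
of `T₁, T₂` on `ℂ²` must be `(trace T₁ / 2, trace T₂ / 2) = (0, 0)`. But a vector `v` with
`⟪v, T₁ v⟫ = conj (v 1) * v 0 = 0` and `⟪v, T₂ v⟫ = |v 0|² - |v 1|² = 0` has one vanishing
coordinate, hence both, so it cannot be a unit vector.
-/

open scoped InnerProductSpace

theorem Matrix.trace_toEuclideanLin {𝕜 ι : Type*} [RCLike 𝕜] [Fintype ι] [DecidableEq ι]
    (A : Matrix ι ι 𝕜) : LinearMap.trace 𝕜 _ (Matrix.toEuclideanLin A) = A.trace := by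
  rw [Matrix.toEuclideanLin_eq_toLin_orthonormal, Matrix.trace_toLin_eq]

theorem LinearMap.card_mul_eq_trace_of_forall_inner_eq {𝕜 E ι : Type*} [RCLike 𝕜] [Fintype ι]
    [NormedAddCommGroup E] [InnerProductSpace 𝕜 E] {T : E →ₗ[𝕜] E}
    (b : OrthonormalBasis ι 𝕜 E) {c : 𝕜} (h : ∀ i, ⟪b i, T (b i)⟫_𝕜 = c) :
    Fintype.card ι * c = T.trace 𝕜 E := by
  simp [T.trace_eq_sum_inner b, h]

theorem Matrix.card_mul_eq_trace_of_forall_inner_toEuclideanLin_eq {𝕜 ι : Type*} [RCLike 𝕜]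
    [Fintype ι] [DecidableEq ι] {A : Matrix ι ι 𝕜} (b : OrthonormalBasis ι 𝕜 (EuclideanSpace 𝕜 ι))
    {c : 𝕜} (h : ∀ i, ⟪b i, Matrix.toEuclideanLin A (b i)⟫_𝕜 = c) :
    Fintype.card ι * c = A.trace := by
  rw [LinearMap.card_mul_eq_trace_of_forall_inner_eq b h, Matrix.trace_toEuclideanLin]

theorem EuclideanSpace.eq_zero_of_inner_toEuclideanLin_eq_zero_fin_two
    {v : EuclideanSpace ℂ (Fin 2)}
    (h₁ : ⟪v, Matrix.toEuclideanLin !![0, 0; 1, 0] v⟫_ℂ = 0)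
    (h₂ : ⟪v, Matrix.toEuclideanLin !![1, 0; 0, -1] v⟫_ℂ = 0) : v = 0 := by
  have inner₁ : ⟪v, Matrix.toEuclideanLin !![0, 0; 1, 0] v⟫_ℂ = v 0 * starRingEnd ℂ (v 1) := by
    simp [Matrix.toLpLin_apply, PiLp.inner_apply, Fin.sum_univ_two, dotProduct]
  have inner₂ : ⟪v, Matrix.toEuclideanLin !![1, 0; 0, -1] v⟫_ℂ =
      ((‖v 0‖ ^ 2 - ‖v 1‖ ^ 2 : ℝ) : ℂ) := by
    simp [Matrix.toLpLin_apply, PiLp.inner_apply, Fin.sum_univ_two, dotProduct, Complex.mul_conj,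
      Complex.normSq_eq_norm_sq]
    ring
  have hnorm : ‖v 0‖ = ‖v 1‖ := by
    rw [inner₂, Complex.ofReal_eq_zero, sub_eq_zero] at h₂
    exact (sq_eq_sq₀ (norm_nonneg _) (norm_nonneg _)).mp h₂
  have hcoord : v 0 = 0 ∧ v 1 = 0 := by
    rw [inner₁, mul_eq_zero, map_eq_zero] at h₁
    rcases h₁ with h | h
    · exact ⟨h, norm_eq_zero.mp (by rw [← hnorm, h, norm_zero])⟩
    · exact ⟨norm_eq_zero.mp (by rw [hnorm, h, norm_zero]), h⟩
  ext i
  fin_cases i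
  exacts [hcoord.1, hcoord.2]

theorem stmt_8 (T₁ T₂ : Matrix (Fin 2) (Fin 2) ℂ)
    (h₁ : T₁ = !![0, 0; 1, 0]) (h₂ : T₂ = !![1, 0; 0, -1]) :
    T₁.trace = 0 ∧ T₂.trace = 0 ∧
    (¬ ∃ u : OrthonormalBasis (Fin 2) ℂ (EuclideanSpace ℂ (Fin 2)),
        ∀ j, (inner ℂ (u j) (Matrix.toEuclideanLin T₁ (u j)) : ℂ) = 0 ∧
             (inner ℂ (u j) (Matrix.toEuclideanLin T₂ (u j)) : ℂ) = 0) ∧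
    {p : ℂ × ℂ | ∃ u : OrthonormalBasis (Fin 2) ℂ (EuclideanSpace ℂ (Fin 2)),
        ∀ j, (inner ℂ (u j) (Matrix.toEuclideanLin T₁ (u j)) : ℂ) = p.1 ∧
             (inner ℂ (u j) (Matrix.toEuclideanLin T₂ (u j)) : ℂ) = p.2} = ∅ := by
  subst h₁ h₂
  have htr₁ : (!![0, 0; 1, 0] : Matrix (Fin 2) (Fin 2) ℂ).trace = 0 := by
    simp [Matrix.trace_fin_two]
  have htr₂ : (!![1, 0; 0, -1] : Matrix (Fin 2) (Fin 2) ℂ).trace = 0 := by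
    simp [Matrix.trace_fin_two]
  have no_zero_diagonal : ¬ ∃ u : OrthonormalBasis (Fin 2) ℂ (EuclideanSpace ℂ (Fin 2)),
      ∀ j, ⟪u j, Matrix.toEuclideanLin !![0, 0; 1, 0] (u j)⟫_ℂ = 0 ∧
        ⟪u j, Matrix.toEuclideanLin !![1, 0; 0, -1] (u j)⟫_ℂ = 0 := by
    rintro ⟨u, hu⟩
    exact u.orthonormal.ne_zero 0
      (EuclideanSpace.eq_zero_of_inner_toEuclideanLin_eq_zero_fin_two (hu 0).1 (hu 0).2)
  refine ⟨htr₁, htr₂, no_zero_diagonal, Set.eq_empty_of_forall_notMem ?_⟩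
  rintro ⟨c₁, c₂⟩ ⟨u, hu⟩
  obtain rfl : c₁ = 0 := by
    simpa [htr₁] using Matrix.card_mul_eq_trace_of_forall_inner_toEuclideanLin_eq u (hu · |>.1)
  obtain rfl : c₂ = 0 := by
    simpa [htr₂] using Matrix.card_mul_eq_trace_of_forall_inner_toEuclideanLin_eq u (hu · |>.2)
  exact no_zero_diagonal ⟨u, hu⟩
end

section
/- Let S1 = T1 ⊕ 0 and S2 = T2 ⊕ 0 on H = ℂ² ⊕ F with T1 = [[0,0],[1,0]] and T2 = [[1,0],[0,-1]], where F is a Hilbert space. If h = (x, f) ∈ H is a unit vector with ⟨S1 h, h⟩ = 0 and ⟨S2 h, h⟩ = 0, then x = 0. -/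
open ComplexConjugate

theorem WithLp.inner_prod_eq_inner_fst_of_snd_eq_zero {𝕜 E F : Type*} [RCLike 𝕜]
    [NormedAddCommGroup E] [InnerProductSpace 𝕜 E] [NormedAddCommGroup F] [InnerProductSpace 𝕜 F]
    (h k : WithLp 2 (E × F)) (hk : k.snd = 0) :
    inner 𝕜 h k = inner 𝕜 h.fst k.fst := by
  simp only [WithLp.prod_inner_apply, WithLp.ofLp_fst, WithLp.ofLp_snd, hk, inner_zero_right,
    add_zero]

theorem inner_self_toEuclideanLin_shift (x : EuclideanSpace ℂ (Fin 2)) :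
    inner ℂ x (Matrix.toEuclideanLin !![0, 0; 1, 0] x) = conj (x 1) * x 0 := by
  simp [Matrix.toLpLin_apply, PiLp.inner_apply, Fin.sum_univ_two, dotProduct, mul_comm]

theorem inner_self_toEuclideanLin_diag_one_neg_one (x : EuclideanSpace ℂ (Fin 2)) :
    inner ℂ x (Matrix.toEuclideanLin !![1, 0; 0, -1] x) = (‖x 0‖ ^ 2 - ‖x 1‖ ^ 2 : ℝ) := by
  simp [Matrix.toLpLin_apply, PiLp.inner_apply, Fin.sum_univ_two, dotProduct, Complex.mul_conj',
    sub_eq_add_neg]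

theorem eq_zero_of_inner_self_toEuclideanLin_shift_of_diag (x : EuclideanSpace ℂ (Fin 2))
    (h₁ : inner ℂ x (Matrix.toEuclideanLin !![0, 0; 1, 0] x) = 0)
    (h₂ : inner ℂ x (Matrix.toEuclideanLin !![1, 0; 0, -1] x) = 0) : x = 0 := by
  rw [inner_self_toEuclideanLin_shift] at h₁
  rw [inner_self_toEuclideanLin_diag_one_neg_one, Complex.ofReal_eq_zero, sub_eq_zero] at h₂
  have hprod : ‖x 0‖ * ‖x 1‖ = 0 := by simpa [mul_comm] using congrArg norm h₁
  have h0 : ‖x 0‖ ^ 2 = 0 := by nlinarith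
  have h1 : ‖x 1‖ ^ 2 = 0 := h₂ ▸ h0
  ext i
  fin_cases i
  · simpa using h0
  · simpa using h1

theorem stmt_18_general {F : Type*} [NormedAddCommGroup F] [InnerProductSpace ℂ F]
    (T₁ T₂ : Matrix (Fin 2) (Fin 2) ℂ)
    (h₁ : T₁ = !![0, 0; 1, 0]) (h₂ : T₂ = !![1, 0; 0, -1])
    (S₁ S₂ : WithLp 2 (EuclideanSpace ℂ (Fin 2) × F) →L[ℂ]
        WithLp 2 (EuclideanSpace ℂ (Fin 2) × F))
    (hS₁ : ∀ h : WithLp 2 (EuclideanSpace ℂ (Fin 2) × F),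
      (S₁ h).fst = Matrix.toEuclideanLin T₁ h.fst ∧ (S₁ h).snd = 0)
    (hS₂ : ∀ h : WithLp 2 (EuclideanSpace ℂ (Fin 2) × F),
      (S₂ h).fst = Matrix.toEuclideanLin T₂ h.fst ∧ (S₂ h).snd = 0)
    (h : WithLp 2 (EuclideanSpace ℂ (Fin 2) × F))
    (hz₁ : (inner ℂ h (S₁ h) : ℂ) = 0) (hz₂ : (inner ℂ h (S₂ h) : ℂ) = 0) :
    h.fst = 0 := by
  subst h₁ h₂
  apply eq_zero_of_inner_self_toEuclideanLin_shift_of_diag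
  · rwa [← (hS₁ h).1, ← WithLp.inner_prod_eq_inner_fst_of_snd_eq_zero h _ (hS₁ h).2]
  · rwa [← (hS₂ h).1, ← WithLp.inner_prod_eq_inner_fst_of_snd_eq_zero h _ (hS₂ h).2]

theorem stmt_18 {F : Type*} [NormedAddCommGroup F] [InnerProductSpace ℂ F]
    (T₁ T₂ : Matrix (Fin 2) (Fin 2) ℂ)
    (h₁ : T₁ = !![0, 0; 1, 0]) (h₂ : T₂ = !![1, 0; 0, -1])
    (S₁ S₂ : WithLp 2 (EuclideanSpace ℂ (Fin 2) × F) →L[ℂ]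
        WithLp 2 (EuclideanSpace ℂ (Fin 2) × F))
    (hS₁ : ∀ h : WithLp 2 (EuclideanSpace ℂ (Fin 2) × F),
      (S₁ h).fst = Matrix.toEuclideanLin T₁ h.fst ∧ (S₁ h).snd = 0)
    (hS₂ : ∀ h : WithLp 2 (EuclideanSpace ℂ (Fin 2) × F),
      (S₂ h).fst = Matrix.toEuclideanLin T₂ h.fst ∧ (S₂ h).snd = 0)
    (h : WithLp 2 (EuclideanSpace ℂ (Fin 2) × F)) (hnorm : ‖h‖ = 1)
    (hz₁ : (inner ℂ h (S₁ h) : ℂ) = 0) (hz₂ : (inner ℂ h (S₂ h) : ℂ) = 0) :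
    h.fst = 0 :=
  stmt_18_general T₁ T₂ h₁ h₂ S₁ S₂ hS₁ hS₂ h hz₁ hz₂
end
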